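/- Let K ⊂ ℝ² be a compact convex body containing the arc {(x, √x) : x ∈ [0,1]} in its boundary. Then for every perfect square τ = m², the dilate τ·∂K contains at least m+1 points of ℤ², hence condition |τ∂K ∩ ℤ²| ≥ C τ^{1/2} holds (with γ = 1/2 in dimension d = 2) along the sequence τ = m². -/
import Mathlib


/-- If a compact convex body `K ⊂ ℝ²` contains the parabola arc
`{(x, √x) : x ∈ [0,1]}` in its boundary, then for every perfect square
`τ = m²` the dilate `τ·∂K` contains at least `m + 1` integer points; in
particular `|τ∂K ∩ ℤ²| ≥ τ^{1/2}` along the sequence `τ = m²`. -/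
theorem convex_body_with_parabola_arc_many_lattice_points
    (K : Set (ℝ × ℝ)) (hKcomp : IsCompact K) (hKconv : Convex ℝ K)
    (harc : {p : ℝ × ℝ | ∃ x : ℝ, 0 ≤ x ∧ x ≤ 1 ∧ p = (x, Real.sqrt x)} ⊆ frontier K)
    (m : ℕ) (hm : 0 < m) :
    m + 1 ≤ Set.ncard {p : ℝ × ℝ |
        p ∈ (fun y => ((m ^ 2 : ℝ)) • y) '' frontier K ∧ ∃ a b : ℤ, p = ((a : ℝ), (b : ℝ))} ∧
    Real.sqrt ((m : ℝ) ^ 2) ≤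
      (Set.ncard {p : ℝ × ℝ |
        p ∈ (fun y => ((m ^ 2 : ℝ)) • y) '' frontier K ∧ ∃ a b : ℤ, p = ((a : ℝ), (b : ℝ))} : ℝ) := by
  have hmR : (0:ℝ) < (m:ℝ) := by exact_mod_cast hm
  set S : Set (ℝ × ℝ) := {p : ℝ × ℝ |
      p ∈ (fun y => ((m ^ 2 : ℝ)) • y) '' frontier K ∧ ∃ a b : ℤ, p = ((a : ℝ), (b : ℝ))}
    with hSdef
  -- frontier K is compact
  have hfrsub : frontier K ⊆ K := by
    have := frontier_subset_closure (s := K)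
    rwa [hKcomp.isClosed.closure_eq] at this
  have hfr : IsCompact (frontier K) :=
    hKcomp.of_isClosed_subset isClosed_frontier hfrsub
  have hCcomp : IsCompact ((fun y => ((m ^ 2 : ℝ)) • y) '' frontier K) :=
    hfr.image (continuous_const_smul _)
  obtain ⟨R, hR⟩ := isBounded_iff_forall_norm_le.mp hCcomp.isBounded
  -- S is finite
  have hfin : S.Finite := by
    have hsub : S ⊆ (fun q : ℤ × ℤ => ((q.1 : ℝ), (q.2 : ℝ))) ''
        ((Set.Icc ⌈-R⌉ ⌊R⌋) ×ˢ (Set.Icc ⌈-R⌉ ⌊R⌋)) := by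
      rintro p ⟨hpC, a, b, rfl⟩
      have hnorm := hR _ hpC
      have ha : |(a:ℝ)| ≤ R := by
        have := norm_fst_le (((a:ℝ), (b:ℝ)) : ℝ × ℝ)
        simpa [Real.norm_eq_abs] using this.trans hnorm
      have hb : |(b:ℝ)| ≤ R := by
        have := norm_snd_le (((a:ℝ), (b:ℝ)) : ℝ × ℝ)
        simpa [Real.norm_eq_abs] using this.trans hnorm
      obtain ⟨ha1, ha2⟩ := abs_le.mp ha
      obtain ⟨hb1, hb2⟩ := abs_le.mp hb
      refine ⟨(a, b), ⟨⟨?_, ?_⟩, ?_, ?_⟩, rfl⟩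
      · exact Int.ceil_le.mpr (by linarith)
      · exact Int.le_floor.mpr ha2
      · exact Int.ceil_le.mpr (by linarith)
      · exact Int.le_floor.mpr hb2
    exact Set.Finite.subset (((Set.finite_Icc _ _).prod (Set.finite_Icc _ _)).image _) hsub
  -- the m+1 lattice points
  set f : ℕ → ℝ × ℝ := fun k => (((k:ℝ))^2, (k:ℝ) * m) with hf
  have hinj : Function.Injective f := by
    intro i j hij
    have h2 : (i:ℝ) * m = (j:ℝ) * m := congrArg Prod.snd hij
    have h3 : (i:ℝ) = (j:ℝ) := mul_right_cancel₀ (ne_of_gt hmR) h2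
    exact_mod_cast h3
  have hmem : ∀ k, k ≤ m → f k ∈ S := by
    intro k hk
    have hkR : (0:ℝ) ≤ (k:ℝ) := Nat.cast_nonneg k
    have hkm : (k:ℝ) ≤ (m:ℝ) := by exact_mod_cast hk
    set x : ℝ := ((k:ℝ) / m) ^ 2 with hx
    have hx0 : 0 ≤ x := sq_nonneg _
    have hx1 : x ≤ 1 := by
      rw [hx]
      have : (k:ℝ)/m ≤ 1 := (div_le_one hmR).mpr hkm
      nlinarith [div_nonneg hkR hmR.le]
    have hsq : Real.sqrt x = (k:ℝ) / m := by
      rw [hx, Real.sqrt_sq (div_nonneg hkR hmR.le)]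
    have hfront : ((x, Real.sqrt x) : ℝ × ℝ) ∈ frontier K :=
      harc ⟨x, hx0, hx1, rfl⟩
    refine ⟨⟨(x, Real.sqrt x), hfront, ?_⟩, ⟨(k:ℤ)^2, (k:ℤ) * m, ?_⟩⟩
    · rw [hsq]
      show ((m:ℝ)^2 • ((x, (k:ℝ)/m) : ℝ × ℝ)) = f k
      rw [Prod.smul_mk, smul_eq_mul, smul_eq_mul, hf, hx]
      have hm0 : (m:ℝ) ≠ 0 := ne_of_gt hmR
      simp only [Prod.mk.injEq]
      constructor <;> field_simp <;> ring
    · simp [hf]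
  -- count via Finset
  have hcard : m + 1 ≤ S.ncard := by
    have hFsub : ↑((Finset.range (m+1)).image f) ⊆ S := by
      intro p hp
      simp only [Finset.coe_image, Set.mem_image, Finset.mem_coe, Finset.mem_range] at hp
      obtain ⟨k, hk, rfl⟩ := hp
      exact hmem k (Nat.lt_succ_iff.mp hk)
    have := Set.ncard_le_ncard hFsub hfin
    rwa [Set.ncard_coe_finset, Finset.card_image_of_injective _ hinj,
      Finset.card_range] at this
  refine ⟨hcard, ?_⟩
  rw [Real.sqrt_sq (Nat.cast_nonneg m)]
  have : (m:ℝ) ≤ (m:ℝ) + 1 := by linarith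
  calc (m:ℝ) ≤ ((m + 1 : ℕ) : ℝ) := by exact_mod_cast Nat.le_succ m
    _ ≤ (S.ncard : ℝ) := by exact_mod_cast hcard
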